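/- arXiv:2212.07117 — 2 statements merged into one kernel-verified Lean document; each statement's English description precedes it below -/
import Mathlib

section
/- Let ρ₁, ρ₂, h₁, h₂ be positive reals with ρ₁ + ρ₂ = 1 and ρ₁/h₁ + ρ₂/h₂ = 1, let δ > 0 and ξ > 0, and define σℓ(ξ) = δ⁻¹ ξ tanh(hℓ δ ξ) for ℓ = 1,2. Then σ₁(ξ)σ₂(ξ)/(ρ₁σ₂(ξ) + ρ₂σ₁(ξ)) ≤ 2ξ². -/
/-! Since `tanh x ≤ x` for `x ≥ 0`, each symbol satisfies `σℓ(ξ) ≤ hℓ ξ²`. The quantity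
`σ₁σ₂/(ρ₁σ₂ + ρ₂σ₁) = (ρ₁/σ₁ + ρ₂/σ₂)⁻¹` is increasing in `σ₁` and `σ₂`, so it is at most
`(ρ₁/h₁ + ρ₂/h₂)⁻¹ ξ² = ξ²`. -/

open Real

lemma Real.sinh_le_mul_cosh {x : ℝ} (hx : 0 ≤ x) : sinh x ≤ x * cosh x := by
  have hderiv (y : ℝ) : HasDerivAt (fun y ↦ y * cosh y - sinh y) (y * sinh y) y :=
    (((hasDerivAt_id' y).mul (hasDerivAt_cosh y)).sub (hasDerivAt_sinh y)).congr_deriv (by ring)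
  have hmono : MonotoneOn (fun y ↦ y * cosh y - sinh y) (Set.Ici 0) := by
    refine monotoneOn_of_deriv_nonneg (convex_Ici 0)
      (fun y _ ↦ (hderiv y).continuousAt.continuousWithinAt)
      (fun y _ ↦ (hderiv y).differentiableAt.differentiableWithinAt) fun y hy ↦ ?_
    rw [interior_Ici, Set.mem_Ioi] at hy
    rw [(hderiv y).deriv]
    exact mul_nonneg hy.le (sinh_nonneg_iff.2 hy.le)
  simpa using hmono Set.self_mem_Ici (Set.mem_Ici.2 hx) hx

lemma Real.tanh_le_self {x : ℝ} (hx : 0 ≤ x) : tanh x ≤ x := by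
  rw [tanh_eq_sinh_div_cosh, div_le_iff₀ (cosh_pos x)]
  exact sinh_le_mul_cosh hx

lemma Real.tanh_pos {x : ℝ} (hx : 0 < x) : 0 < tanh x := by
  rw [tanh_eq_sinh_div_cosh]
  exact div_pos (sinh_pos_iff.2 hx) (cosh_pos x)

lemma inv_mul_mul_tanh_le {h δ ξ : ℝ} (hh : 0 ≤ h) (hδ : 0 < δ) (hξ : 0 ≤ ξ) :
    δ⁻¹ * ξ * tanh (h * δ * ξ) ≤ h * ξ ^ 2 :=
  calc δ⁻¹ * ξ * tanh (h * δ * ξ) ≤ δ⁻¹ * ξ * (h * δ * ξ) := by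
        gcongr
        exact tanh_le_self (by positivity)
    _ = h * ξ ^ 2 := by field_simp

lemma inv_mul_mul_tanh_pos {h δ ξ : ℝ} (hh : 0 < h) (hδ : 0 < δ) (hξ : 0 < ξ) :
    0 < δ⁻¹ * ξ * tanh (h * δ * ξ) := by
  have := tanh_pos (by positivity : 0 < h * δ * ξ)
  positivity

lemma mul_div_weighted_add_le {p q a b A B : ℝ} (hp : 0 < p) (hq : 0 < q) (ha : 0 < a)
    (hb : 0 < b) (haA : a ≤ A) (hbB : b ≤ B) :
    a * b / (p * b + q * a) ≤ A * B / (p * B + q * A) := by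
  have hA : 0 < A := ha.trans_le haA
  have hB : 0 < B := hb.trans_le hbB
  have inv_form {x y : ℝ} (hx : 0 < x) (hy : 0 < y) :
      x * y / (p * y + q * x) = (p / x + q / y)⁻¹ := by
    field_simp
  rw [inv_form ha hb, inv_form hA hB]
  gcongr

theorem stmt5_general (ρ₁ ρ₂ h₁ h₂ δ ξ : ℝ) (hρ₁ : 0 < ρ₁) (hρ₂ : 0 < ρ₂)
    (hh₁ : 0 < h₁) (hh₂ : 0 < h₂) (hδ : 0 < δ) (hξ : 0 < ξ)
    (hdep : ρ₁ / h₁ + ρ₂ / h₂ = 1)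
    (σ₁ σ₂ : ℝ)
    (hσ₁ : σ₁ = δ⁻¹ * ξ * Real.tanh (h₁ * δ * ξ))
    (hσ₂ : σ₂ = δ⁻¹ * ξ * Real.tanh (h₂ * δ * ξ)) :
    σ₁ * σ₂ / (ρ₁ * σ₂ + ρ₂ * σ₁) ≤ 2 * ξ ^ 2 := by
  subst hσ₁ hσ₂
  have hdep' : ρ₁ * h₂ + ρ₂ * h₁ = h₁ * h₂ := by
    field_simp at hdep
    linarith
  calc _ ≤ h₁ * ξ ^ 2 * (h₂ * ξ ^ 2) / (ρ₁ * (h₂ * ξ ^ 2) + ρ₂ * (h₁ * ξ ^ 2)) :=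
        mul_div_weighted_add_le hρ₁ hρ₂ (inv_mul_mul_tanh_pos hh₁ hδ hξ)
          (inv_mul_mul_tanh_pos hh₂ hδ hξ) (inv_mul_mul_tanh_le hh₁.le hδ hξ.le)
          (inv_mul_mul_tanh_le hh₂.le hδ hξ.le)
    _ = ξ ^ 2 := by
        rw [div_eq_iff (by positivity)]
        linear_combination (-ξ ^ 4) * hdep'
    _ ≤ 2 * ξ ^ 2 := by linarith [sq_nonneg ξ]

theorem stmt5 (ρ₁ ρ₂ h₁ h₂ δ ξ : ℝ) (hρ₁ : 0 < ρ₁) (hρ₂ : 0 < ρ₂)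
    (hh₁ : 0 < h₁) (hh₂ : 0 < h₂) (hδ : 0 < δ) (hξ : 0 < ξ)
    (hsum : ρ₁ + ρ₂ = 1) (hdep : ρ₁ / h₁ + ρ₂ / h₂ = 1)
    (σ₁ σ₂ : ℝ)
    (hσ₁ : σ₁ = δ⁻¹ * ξ * Real.tanh (h₁ * δ * ξ))
    (hσ₂ : σ₂ = δ⁻¹ * ξ * Real.tanh (h₂ * δ * ξ)) :
    σ₁ * σ₂ / (ρ₁ * σ₂ + ρ₂ * σ₁) ≤ 2 * ξ ^ 2 :=
  stmt5_general ρ₁ ρ₂ h₁ h₂ δ ξ hρ₁ hρ₂ hh₁ hh₂ hδ hξ hdep σ₁ σ₂ hσ₁ hσ₂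
end

section
/- Let A be a symmetric positive definite N×N real matrix and l ∈ ℝᴺ a nonzero vector, and suppose the (N+1)×(N+1) block matrix [[0, lᵀ],[−l, A]] is invertible with inverse written in block form [[q, qᵀ_vec],[−q_vec, Q]]. Then q = 1/(lᵀ A⁻¹ l), Q = A⁻¹ − q A⁻¹ l lᵀ A⁻¹, the matrix Q is positive semidefinite, and for every φ ∈ ℝᴺ one has the decomposition φᵀ A φ = q (l·φ)² + (Aφ)ᵀ Q (Aφ). -/
/-!
Multiplying out `M⁻¹ * M = 1` blockwise gives `q_vec ⬝ l = -1`, `q • l + q_vec A = 0`,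
`Q l = 0` and `Q A = 1 + q_vec lᵀ`. As `A` is symmetric, `q_vec = -q A⁻¹ l`, which yields the
formulas for `q` and `Q`. Then `Q` is symmetric and `Q A Q = Q + q_vec (Q l)ᵀ = Q`, so
`Q = Qᵀ A Q` is positive semidefinite. The decomposition is the formula for `Q` evaluated at `A φ`.
-/

open Matrix

namespace Matrix

variable {α n : Type*} [Fintype n]

def bordered [Neg α] (a : α) (w : n → α) (B : Matrix n n α) :
    Matrix (Fin 1 ⊕ n) (Fin 1 ⊕ n) α :=
  fromBlocks (of fun _ _ => a) (replicateRow (Fin 1) w) (replicateCol (Fin 1) (-w)) B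

theorem bordered_mul_bordered_zero_eq_one_iff [CommRing α] [DecidableEq n] {a : α}
    {w l : n → α} {Q A : Matrix n n α} :
    bordered a w Q * bordered 0 l A = 1 ↔
      w ⬝ᵥ l = -1 ∧ a • l + w ᵥ* A = 0 ∧ Q *ᵥ l = 0 ∧
        Q * A - vecMulVec w l = 1 := by
  rw [bordered, bordered, fromBlocks_multiply, ← fromBlocks_one, fromBlocks_inj]
  refine and_congr ?_ (and_congr ?_ (and_congr ?_ ?_))
  · simp [← Matrix.ext_iff, mul_apply, dotProduct, neg_eq_iff_eq_neg]
  · simp [← Matrix.ext_iff, mul_apply, funext_iff, vecMul, dotProduct]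
  · simp [← Matrix.ext_iff, mul_apply, funext_iff, mulVec, dotProduct]
  · simp [← Matrix.ext_iff, mul_apply, vecMulVec_apply, sub_eq_neg_add]

section Symmetric

variable [CommRing α] [DecidableEq n] {A : Matrix n n α}

theorem vecMul_nonsing_inv_of_transpose_eq (hAt : Aᵀ = A) (x : n → α) :
    x ᵥ* A⁻¹ = A⁻¹ *ᵥ x := by
  rw [← mulVec_transpose, transpose_nonsing_inv, hAt]

variable (hA : IsUnit A.det) (hAt : Aᵀ = A)
include hA hAt

theorem dotProduct_mulVec_eq_mul_sq_add (a : α) (l φ : n → α) :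
    φ ⬝ᵥ A *ᵥ φ = a * (l ⬝ᵥ φ) ^ 2 +
      (A *ᵥ φ) ⬝ᵥ (A⁻¹ - a • vecMulVec (A⁻¹ *ᵥ l) (A⁻¹ *ᵥ l)) *ᵥ (A *ᵥ φ) := by
  have hv : (A⁻¹ *ᵥ l) ⬝ᵥ A *ᵥ φ = l ⬝ᵥ φ := by
    rw [dotProduct_mulVec, ← vecMul_nonsing_inv_of_transpose_eq hAt, vecMul_vecMul,
      nonsing_inv_mul A hA, vecMul_one]
  rw [sub_mulVec, mulVec_mulVec, nonsing_inv_mul A hA, one_mulVec, smul_mulVec, vecMulVec_mulVec,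
    dotProduct_sub, dotProduct_smul, dotProduct_smul, hv, dotProduct_comm _ (A⁻¹ *ᵥ l), hv,
    op_smul_eq_mul, smul_eq_mul, dotProduct_comm (A *ᵥ φ)]
  ring

variable {a : α} {w l : n → α} {Q : Matrix n n α} (h : bordered a w Q * bordered 0 l A = 1)
include h

theorem bordered_inv_row_eq : w = -a • (A⁻¹ *ᵥ l) := by
  have hrow := (bordered_mul_bordered_zero_eq_one_iff.mp h).2.1
  calc w = w ᵥ* A ᵥ* A⁻¹ := by rw [vecMul_vecMul, mul_nonsing_inv A hA, vecMul_one]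
    _ = (-a • l) ᵥ* A⁻¹ := by rw [eq_neg_of_add_eq_zero_right hrow, neg_smul]
    _ = -a • (A⁻¹ *ᵥ l) := by rw [smul_vecMul, vecMul_nonsing_inv_of_transpose_eq hAt]

theorem bordered_inv_corner_mul_eq_one : a * (l ⬝ᵥ A⁻¹ *ᵥ l) = 1 := by
  have hwl := (bordered_mul_bordered_zero_eq_one_iff.mp h).1
  rwa [bordered_inv_row_eq hA hAt h, neg_smul, neg_dotProduct, smul_dotProduct, neg_inj,
    dotProduct_comm, smul_eq_mul] at hwl

theorem bordered_inv_block_eq : Q = A⁻¹ - a • vecMulVec (A⁻¹ *ᵥ l) (A⁻¹ *ᵥ l) := by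
  have hQA := (bordered_mul_bordered_zero_eq_one_iff.mp h).2.2.2
  calc Q = Q * A * A⁻¹ := by rw [Matrix.mul_assoc, mul_nonsing_inv A hA, Matrix.mul_one]
    _ = (1 + vecMulVec w l) * A⁻¹ := by rw [← hQA, sub_add_cancel]
    _ = A⁻¹ + vecMulVec w (A⁻¹ *ᵥ l) := by
      rw [Matrix.add_mul, Matrix.one_mul, vecMulVec_mul, vecMul_nonsing_inv_of_transpose_eq hAt]
    _ = A⁻¹ - a • vecMulVec (A⁻¹ *ᵥ l) (A⁻¹ *ᵥ l) := by
      rw [bordered_inv_row_eq hA hAt h, neg_smul, neg_vecMulVec, ← smul_vecMulVec, sub_eq_add_neg]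

theorem bordered_inv_block_transpose : Qᵀ = Q := by
  rw [bordered_inv_block_eq hA hAt h, transpose_sub, transpose_smul, transpose_vecMulVec,
    transpose_nonsing_inv, hAt]

theorem bordered_inv_block_mul_mul_self : Q * A * Q = Q := by
  obtain ⟨-, -, hQl, hQA⟩ := bordered_mul_bordered_zero_eq_one_iff.mp h
  rw [← sub_add_cancel (Q * A) (vecMulVec w l), hQA, Matrix.add_mul, Matrix.one_mul,
    vecMulVec_mul, ← mulVec_transpose, bordered_inv_block_transpose hA hAt h, hQl,
    vecMulVec_zero, add_zero]

end Symmetric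

theorem PosSemidef.of_mul_mul_eq_self {R : Type*} [Ring R] [PartialOrder R] [StarRing R]
    {A Q : Matrix n n R} (hA : A.PosSemidef) (hQ : Q.IsHermitian)
    (h : Q * A * Q = Q) : Q.PosSemidef := by
  have := hA.conjTranspose_mul_mul_same Q
  rwa [hQ.eq, h] at this

end Matrix

theorem stmt11_general (N : ℕ) (A : Matrix (Fin N) (Fin N) ℝ) (hA : A.PosDef)
    (l : Fin N → ℝ)
    (M : Matrix (Fin 1 ⊕ Fin N) (Fin 1 ⊕ Fin N) ℝ)
    (hM : M = Matrix.fromBlocks (0 : Matrix (Fin 1) (Fin 1) ℝ)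
      (Matrix.of fun _ j => l j) (Matrix.of fun i _ => -(l i)) A)
    (hMinv : IsUnit M.det)
    (q : ℝ) (qv : Fin N → ℝ) (Q : Matrix (Fin N) (Fin N) ℝ)
    (hblocks : M⁻¹ = Matrix.fromBlocks (Matrix.of fun _ _ => q)
      (Matrix.of fun _ j => qv j) (Matrix.of fun i _ => -(qv i)) Q) :
    q = 1 / (l ⬝ᵥ A⁻¹ *ᵥ l) ∧
      Q = A⁻¹ - q • Matrix.vecMulVec (A⁻¹ *ᵥ l) (A⁻¹ *ᵥ l) ∧
      Q.PosSemidef ∧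
      ∀ φ : Fin N → ℝ,
        φ ⬝ᵥ A *ᵥ φ = q * (l ⬝ᵥ φ) ^ 2 + (A *ᵥ φ) ⬝ᵥ Q *ᵥ (A *ᵥ φ) := by
  have hAu : IsUnit A.det := hA.det_pos.ne'.isUnit
  have hAt : Aᵀ = A := hA.isHermitian
  have h : bordered q qv Q * bordered 0 l A = 1 := by
    have := nonsing_inv_mul M hMinv
    rwa [hblocks, hM] at this
  have hQ := bordered_inv_block_eq hAu hAt h
  refine ⟨eq_one_div_of_mul_eq_one_left (bordered_inv_corner_mul_eq_one hAu hAt h), hQ,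
    hA.posSemidef.of_mul_mul_eq_self (bordered_inv_block_transpose hAu hAt h)
      (bordered_inv_block_mul_mul_self hAu hAt h), fun φ => ?_⟩
  rw [hQ]
  exact dotProduct_mulVec_eq_mul_sq_add hAu hAt q l φ

theorem stmt11 (N : ℕ) (A : Matrix (Fin N) (Fin N) ℝ) (hA : A.PosDef)
    (l : Fin N → ℝ) (hl : l ≠ 0)
    (M : Matrix (Fin 1 ⊕ Fin N) (Fin 1 ⊕ Fin N) ℝ)
    (hM : M = Matrix.fromBlocks (0 : Matrix (Fin 1) (Fin 1) ℝ)
      (Matrix.of fun _ j => l j) (Matrix.of fun i _ => -(l i)) A)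
    (hMinv : IsUnit M.det)
    (q : ℝ) (qv : Fin N → ℝ) (Q : Matrix (Fin N) (Fin N) ℝ)
    (hblocks : M⁻¹ = Matrix.fromBlocks (Matrix.of fun _ _ => q)
      (Matrix.of fun _ j => qv j) (Matrix.of fun i _ => -(qv i)) Q) :
    q = 1 / (l ⬝ᵥ A⁻¹ *ᵥ l) ∧
      Q = A⁻¹ - q • Matrix.vecMulVec (A⁻¹ *ᵥ l) (A⁻¹ *ᵥ l) ∧
      Q.PosSemidef ∧
      ∀ φ : Fin N → ℝ,
        φ ⬝ᵥ A *ᵥ φ = q * (l ⬝ᵥ φ) ^ 2 + (A *ᵥ φ) ⬝ᵥ Q *ᵥ (A *ᵥ φ) :=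
  stmt11_general N A hA l M hM hMinv q qv Q hblocks
end
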